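/- Let ū ∈ Uad and F'(ū) ∈ L²(Ω_T) be such that −F'(ū) ∈ ∂G₁(ū), where G₁ := δ_{Uad} + μ j₁. Then the weak second subderivative satisfies G₁''(ū, −F'(ū); v) = 0 for every v in the critical cone C_ū := {v ∈ T_{Uad}(ū) : ⟨F'(ū), v⟩_{L²} + μ j₁'(ū;v) = 0}, and G₁ is strongly twice epi-differentiable at ū for −F'(ū). -/

import Mathlib

open MeasureTheory Filter Topology

noncomputable section

/-- The measure on `Ω_T = Ω × (0,T)`: Lebesgue measure restricted to `Ω ×ˢ (0,T)`. -/
def OmT (d : ℕ) (Ω : Set (Fin d → ℝ)) (T : ℝ) : Measure ((Fin d → ℝ) × ℝ) :=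
  volume.restrict (Ω ×ˢ Set.Ioo 0 T)

/-- The admissible set `Uad = { u ∈ L²(Ω_T) : α ≤ u ≤ β a.e. }`. -/
def Uad (d : ℕ) (Ω : Set (Fin d → ℝ)) (T α β : ℝ) : Set (Lp ℝ 2 (OmT d Ω T)) :=
  { u | ∀ᵐ p ∂(OmT d Ω T), α ≤ u p ∧ u p ≤ β }

open Classical in
/-- The indicator function (in the sense of convex analysis) of `Uad`. -/
def indUad (d : ℕ) (Ω : Set (Fin d → ℝ)) (T α β : ℝ) :
    Lp ℝ 2 (OmT d Ω T) → EReal :=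
  fun u => if u ∈ Uad d Ω T α β then 0 else ⊤

/-- The tangent cone `T_{Uad}(ū)`. -/
def TanCone (d : ℕ) (Ω : Set (Fin d → ℝ)) (T α β : ℝ) (ub : Lp ℝ 2 (OmT d Ω T)) :
    Set (Lp ℝ 2 (OmT d Ω T)) :=
  { v | ∀ᵐ p ∂(OmT d Ω T), (ub p = α → 0 ≤ v p) ∧ (ub p = β → v p ≤ 0) }

/-- Weak convergence in the Hilbert space `L²(Ω_T)`. -/
def WConv (d : ℕ) (Ω : Set (Fin d → ℝ)) (T : ℝ)
    (v : ℕ → Lp ℝ 2 (OmT d Ω T)) (h : Lp ℝ 2 (OmT d Ω T)) : Prop :=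
  ∀ w : Lp ℝ 2 (OmT d Ω T),
    Tendsto (fun k => (inner ℝ (v k) w : ℝ)) atTop (𝓝 (inner ℝ h w : ℝ))

/-- The weak first subderivative `G^↓(ū; v)` in `L²(Ω_T)`. -/
def wfs (d : ℕ) (Ω : Set (Fin d → ℝ)) (T : ℝ)
    (G : Lp ℝ 2 (OmT d Ω T) → EReal) (x h : Lp ℝ 2 (OmT d Ω T)) : EReal :=
  sInf { L : EReal | ∃ (t : ℕ → ℝ) (v : ℕ → Lp ℝ 2 (OmT d Ω T)),
    (∀ k, 0 < t k) ∧ Tendsto t atTop (𝓝 0) ∧ WConv d Ω T v h ∧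
    L = liminf (fun k => (((t k)⁻¹ : ℝ) : EReal) * (G (x + t k • v k) - G x)) atTop }

/-- The weak second subderivative `G''(ū, w; v)` in `L²(Ω_T)`. -/
def ssub (d : ℕ) (Ω : Set (Fin d → ℝ)) (T : ℝ)
    (G : Lp ℝ 2 (OmT d Ω T) → EReal) (x w h : Lp ℝ 2 (OmT d Ω T)) : EReal :=
  sInf { L : EReal | ∃ (t : ℕ → ℝ) (v : ℕ → Lp ℝ 2 (OmT d Ω T)),
    (∀ k, 0 < t k) ∧ Tendsto t atTop (𝓝 0) ∧ WConv d Ω T v h ∧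
    L = liminf (fun k =>
      ((2 / (t k) ^ 2 : ℝ) : EReal) *
        (G (x + t k • v k) - G x - ((t k * (inner ℝ w (v k) : ℝ) : ℝ) : EReal))) atTop }

/-- `G` is strongly twice epi-differentiable at `ū` for `w`. -/
def STED (d : ℕ) (Ω : Set (Fin d → ℝ)) (T : ℝ)
    (G : Lp ℝ 2 (OmT d Ω T) → EReal) (x w : Lp ℝ 2 (OmT d Ω T)) : Prop :=
  ∀ h : Lp ℝ 2 (OmT d Ω T), ∀ t : ℕ → ℝ, (∀ k, 0 < t k) → Tendsto t atTop (𝓝 0) →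
    ∃ v : ℕ → Lp ℝ 2 (OmT d Ω T), Tendsto v atTop (𝓝 h) ∧
      Tendsto (fun k =>
        ((2 / (t k) ^ 2 : ℝ) : EReal) *
          (G (x + t k • v k) - G x - ((t k * (inner ℝ w (v k) : ℝ) : ℝ) : EReal))) atTop
        (𝓝 (ssub d Ω T G x w h))

/-- `j₁(u) = ∫_{Ω_T} |u|`. -/
def j1 (d : ℕ) (Ω : Set (Fin d → ℝ)) (T : ℝ) (u : Lp ℝ 2 (OmT d Ω T)) : ℝ :=
  ∫ p, |u p| ∂(OmT d Ω T)

/-- The directional derivative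
`j₁'(ū; v) = ∫_{ū>0} v - ∫_{ū<0} v + ∫_{ū=0} |v|`. -/
def j1' (d : ℕ) (Ω : Set (Fin d → ℝ)) (T : ℝ) (ub v : Lp ℝ 2 (OmT d Ω T)) : ℝ :=
  ∫ p, (if 0 < ub p then v p else if ub p < 0 then -v p else |v p|) ∂(OmT d Ω T)

/-- `G₁ = δ_{Uad} + μ j₁`. -/
def G1 (d : ℕ) (Ω : Set (Fin d → ℝ)) (T α β μ₀ : ℝ) :
    Lp ℝ 2 (OmT d Ω T) → EReal :=
  fun u => indUad d Ω T α β u + ((μ₀ * j1 d Ω T u : ℝ) : EReal)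

namespace Stmt17Aux

/-- pointwise integrand of `j₁'`. -/
def gf (u0 s : ℝ) : ℝ := if 0 < u0 then s else if u0 < 0 then -s else |s|

lemma gf_zero (u0 : ℝ) : gf u0 0 = 0 := by simp [gf]

lemma abs_gf_le (u0 s : ℝ) : |gf u0 s| ≤ |s| := by
  unfold gf; split_ifs <;> simp [abs_neg, abs_abs]

lemma gf_lb {t : ℝ} (ht : 0 ≤ t) (u0 s : ℝ) :
    t * gf u0 s ≤ |u0 + t * s| - |u0| := by
  unfold gf; split_ifs with h1 h2
  · have := le_abs_self (u0 + t * s); rw [abs_of_pos h1]; linarith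
  · rw [abs_of_neg h2]; nlinarith [neg_abs_le (u0 + t * s)]
  · have h0 : u0 = 0 := le_antisymm (not_lt.1 h1) (not_lt.1 h2)
    subst h0; simp [abs_mul, abs_of_nonneg ht]

lemma between_abs {x y : ℝ} (h1 : min y 0 ≤ x) (h2 : x ≤ max y 0) : |x| ≤ |y| :=
  abs_le.2 ⟨le_trans (le_min (neg_abs_le y) (neg_nonpos.2 (abs_nonneg y))) h1,
    le_trans h2 (max_le (le_abs_self y) (abs_nonneg y))⟩

/-- the truncation operator -/
def tr (a b u0 h0 t : ℝ) : ℝ :=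
  if u0 ≠ 0 ∧ |u0| < Real.sqrt t then 0
  else min (min (Real.sqrt t)⁻¹ ((b - u0) / t)) (max (max (-(Real.sqrt t)⁻¹) ((a - u0) / t)) h0)

lemma tr_between {a b u0 h0 t : ℝ} (ht : 0 < t) (hau : a ≤ u0) (hub : u0 ≤ b) :
    min h0 0 ≤ tr a b u0 h0 t ∧ tr a b u0 h0 t ≤ max h0 0 := by
  have hr : 0 < Real.sqrt t := Real.sqrt_pos.2 ht
  unfold tr
  split_ifs with hc
  · exact ⟨min_le_right _ _, le_max_right _ _⟩
  · have hR : (0:ℝ) ≤ min (Real.sqrt t)⁻¹ ((b - u0) / t) :=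
      le_min (by positivity) (div_nonneg (by linarith) ht.le)
    have hL : max (-(Real.sqrt t)⁻¹) ((a - u0) / t) ≤ 0 :=
      max_le (by simp [hr.le]) (div_nonpos_of_nonpos_of_nonneg (by linarith) ht.le)
    constructor
    · exact le_min ((min_le_right h0 0).trans hR) ((min_le_left h0 0).trans (le_max_right _ _))
    · exact (min_le_right _ _).trans (max_le (hL.trans (le_max_right h0 0)) (le_max_left h0 0))

lemma tr_feas {a b u0 h0 t : ℝ} (ht : 0 < t) (hau : a ≤ u0) (hub : u0 ≤ b) :
    a ≤ u0 + t * tr a b u0 h0 t ∧ u0 + t * tr a b u0 h0 t ≤ b := by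
  have hr : 0 < Real.sqrt t := Real.sqrt_pos.2 ht
  unfold tr
  split_ifs with hc
  · constructor <;> simp [hau, hub]
  · have hy : (0:ℝ) ≤ (Real.sqrt t)⁻¹ := inv_nonneg.2 hr.le
    have hx : (0:ℝ) ≤ (b - u0) / t := div_nonneg (by linarith) ht.le
    set s := min (min (Real.sqrt t)⁻¹ ((b - u0) / t))
      (max (max (-(Real.sqrt t)⁻¹) ((a - u0) / t)) h0) with hs
    have h1 : (a - u0) / t ≤ s := by
      rw [hs]
      refine le_min (le_trans (div_nonpos_of_nonpos_of_nonneg (by linarith) ht.le)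
        (le_min hy hx)) ?_
      exact (le_max_right (-(Real.sqrt t)⁻¹) _).trans (le_max_left _ h0)
    have h2 : s ≤ (b - u0) / t := (min_le_left _ _).trans (min_le_right _ _)
    constructor
    · have := (div_le_iff₀ ht).1 h1
      nlinarith
    · have := (le_div_iff₀ ht).1 h2
      nlinarith

lemma tr_id {a b u0 h0 t : ℝ} (ht : 0 < t) (hau : a ≤ u0) (hub : u0 ≤ b) :
    |u0 + t * tr a b u0 h0 t| - |u0| = t * gf u0 (tr a b u0 h0 t) := by
  have hr : 0 < Real.sqrt t := Real.sqrt_pos.2 ht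
  by_cases h0' : u0 = 0
  · subst h0'
    have hg : gf 0 (tr a b 0 h0 t) = |tr a b 0 h0 t| := by simp [gf]
    rw [hg]
    simp [abs_mul, abs_of_pos ht]
  · by_cases hsm : |u0| < Real.sqrt t
    · rw [tr, if_pos ⟨h0', hsm⟩, mul_zero, add_zero, gf_zero, mul_zero, sub_self]
    · have hcond : ¬(u0 ≠ 0 ∧ |u0| < Real.sqrt t) := fun hc => hsm hc.2
      set s := tr a b u0 h0 t with hs
      have hsval : s = min (min (Real.sqrt t)⁻¹ ((b - u0) / t))
          (max (max (-(Real.sqrt t)⁻¹) ((a - u0) / t)) h0) := by rw [hs, tr, if_neg hcond]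
      have hsub' : s ≤ (Real.sqrt t)⁻¹ := by
        rw [hsval]; exact (min_le_left _ _).trans (min_le_left _ _)
      have hy : (0:ℝ) ≤ (Real.sqrt t)⁻¹ := inv_nonneg.2 hr.le
      have hx : (0:ℝ) ≤ (b - u0) / t := div_nonneg (by linarith) ht.le
      have hslb : -(Real.sqrt t)⁻¹ ≤ s := by
        rw [hsval]
        refine le_min (le_trans (by linarith) (le_min hy hx)) ?_
        exact (le_max_left (-(Real.sqrt t)⁻¹) _).trans (le_max_left _ h0)
      have habs : |s| ≤ (Real.sqrt t)⁻¹ := abs_le.2 ⟨hslb, hsub'⟩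
      have htr : t * (Real.sqrt t)⁻¹ = Real.sqrt t := by
        rw [← div_eq_mul_inv]; exact Real.div_sqrt
      have hts : t * |s| ≤ |u0| := by
        have h3 : t * |s| ≤ t * (Real.sqrt t)⁻¹ := mul_le_mul_of_nonneg_left habs ht.le
        rw [htr] at h3
        exact h3.trans (not_lt.1 hsm)
      rcases Ne.lt_or_gt h0' with hneg | hpos
      · have h2 : t * s ≤ t * |s| := mul_le_mul_of_nonneg_left (le_abs_self s) ht.le
        have h1 : u0 + t * s ≤ 0 := by rw [abs_of_neg hneg] at hts; linarith
        rw [abs_of_nonpos h1, abs_of_neg hneg]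
        have hgf : gf u0 s = -s := by simp [gf, hneg, lt_asymm hneg]
        rw [hgf]; ring
      · have h2 : -(t * |s|) ≤ t * s := by nlinarith [neg_abs_le s]
        have h1 : 0 ≤ u0 + t * s := by rw [abs_of_pos hpos] at hts; linarith
        rw [abs_of_nonneg h1, abs_of_pos hpos]
        have hgf : gf u0 s = s := by simp [gf, hpos]
        rw [hgf]; ring

lemma phi_scale {w0 m0 u0 h0 s : ℝ} (hl : min h0 0 ≤ s) (hu : s ≤ max h0 0)
    (hphi : w0 * h0 + m0 * gf u0 h0 = 0) : w0 * s + m0 * gf u0 s = 0 := by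
  rcases le_or_gt 0 h0 with hh | hh
  · have hs0 : (0:ℝ) ≤ s := (min_eq_right hh) ▸ hl
    have hsh : s ≤ h0 := (max_eq_left hh) ▸ hu
    have hg : ∀ x : ℝ, 0 ≤ x →
        gf u0 x = (if 0 < u0 then (1:ℝ) else if u0 < 0 then -1 else 1) * x := by
      intro x hx; rw [gf]; split_ifs <;> simp [abs_of_nonneg hx]
    rw [hg s hs0]; rw [hg h0 hh] at hphi
    have h2 : (w0 + m0 * (if 0 < u0 then (1:ℝ) else if u0 < 0 then -1 else 1)) * h0 = 0 := by
      linear_combination hphi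
    rcases mul_eq_zero.1 h2 with h3 | h3
    · linear_combination s * h3
    · have hz : s = 0 := le_antisymm (h3 ▸ hsh) hs0
      rw [hz]; ring
  · have hs0 : s ≤ 0 := hu.trans (le_of_eq (max_eq_right hh.le))
    have hsh : h0 ≤ s := (min_eq_left hh.le) ▸ hl
    have hg : ∀ x : ℝ, x ≤ 0 →
        gf u0 x = (if 0 < u0 then (1:ℝ) else if u0 < 0 then -1 else -1) * x := by
      intro x hx; rw [gf]; split_ifs <;> simp [abs_of_nonpos hx]
    rw [hg s hs0]; rw [hg h0 hh.le] at hphi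
    have h2 : (w0 + m0 * (if 0 < u0 then (1:ℝ) else if u0 < 0 then -1 else -1)) * h0 = 0 := by
      linear_combination hphi
    rcases mul_eq_zero.1 h2 with h3 | h3
    · linear_combination s * h3
    · have hz : s = 0 := le_antisymm hs0 (h3 ▸ hsh)
      rw [hz]; ring

lemma tr_eventually {a b u0 h0 : ℝ} (hau : a ≤ u0) (hub : u0 ≤ b)
    (h1 : u0 = a → 0 ≤ h0) (h2 : u0 = b → h0 ≤ 0)
    {t : ℕ → ℝ} (htp : ∀ n, 0 < t n) (ht0 : Tendsto t atTop (𝓝 0)) :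
    ∀ᶠ n in atTop, tr a b u0 h0 (t n) = h0 := by
  have hrt : Tendsto (fun n => Real.sqrt (t n)) atTop (𝓝 0) := by
    have h3 := (Real.continuous_sqrt.tendsto 0).comp ht0
    simpa [Function.comp_def] using h3
  -- box upper
  have hb' : ∀ᶠ n in atTop, h0 ≤ (b - u0) / t n := by
    rcases eq_or_lt_of_le hub with he | hlt
    · filter_upwards with n
      rw [show b - u0 = 0 by rw [he, sub_self], zero_div]
      exact h2 he
    · have hpos : (0:ℝ) < (b - u0) / (|h0| + 1) := div_pos (by linarith) (by positivity)
      filter_upwards [ht0.eventually_lt_const hpos] with n hn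
      rw [le_div_iff₀ (htp n)]
      have h4 : h0 * t n ≤ |h0| * t n := mul_le_mul_of_nonneg_right (le_abs_self h0) (htp n).le
      rw [lt_div_iff₀ (by positivity : (0:ℝ) < |h0| + 1)] at hn
      nlinarith [abs_nonneg h0, (htp n).le]
  -- box lower
  have ha' : ∀ᶠ n in atTop, (a - u0) / t n ≤ h0 := by
    rcases eq_or_lt_of_le hau with he | hlt
    · filter_upwards with n
      rw [show a - u0 = 0 by rw [← he, sub_self], zero_div]
      exact h1 he.symm
    · have hpos : (0:ℝ) < (u0 - a) / (|h0| + 1) := div_pos (by linarith) (by positivity)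
      filter_upwards [ht0.eventually_lt_const hpos] with n hn
      rw [div_le_iff₀ (htp n)]
      rw [lt_div_iff₀ (by positivity : (0:ℝ) < |h0| + 1)] at hn
      nlinarith [neg_abs_le h0, (htp n).le, abs_nonneg h0]
  -- cap
  have hcap : ∀ᶠ n in atTop,
      h0 ≤ (Real.sqrt (t n))⁻¹ ∧ -(Real.sqrt (t n))⁻¹ ≤ h0 := by
    have hpos : (0:ℝ) < (|h0| + 1)⁻¹ := by positivity
    filter_upwards [hrt.eventually_lt_const hpos] with n hn
    have hr : 0 < Real.sqrt (t n) := Real.sqrt_pos.2 (htp n)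
    have h5 : |h0| + 1 < (Real.sqrt (t n))⁻¹ := by
      have h6 := inv_strictAnti₀ hr hn
      rwa [inv_inv] at h6
    constructor
    · nlinarith [le_abs_self h0]
    · nlinarith [neg_abs_le h0]
  -- zeroing off
  have hzero : ∀ᶠ n in atTop, ¬(u0 ≠ 0 ∧ |u0| < Real.sqrt (t n)) := by
    by_cases hu0 : u0 = 0
    · filter_upwards with n hc; exact hc.1 hu0
    · filter_upwards [hrt.eventually_lt_const (abs_pos.2 hu0)] with n hn hc
      exact absurd hc.2 (not_lt.2 hn.le)
  filter_upwards [hb', ha', hcap, hzero] with n e1 e2 e3 e4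
  rw [tr, if_neg e4]
  have hmax : max (max (-(Real.sqrt (t n))⁻¹) ((a - u0) / t n)) h0 = h0 :=
    max_eq_right (max_le e3.2 e2)
  rw [hmax]
  exact min_eq_right (le_min e3.1 e1)


section MeasAux

variable {d : ℕ} {Ω : Set (Fin d → ℝ)} {T α β μ₀ : ℝ}

local notation "ν" => OmT d Ω T
local notation "LP" => Lp ℝ 2 (OmT d Ω T)

lemma finOmT (hΩb : Bornology.IsBounded Ω) : IsFiniteMeasure (OmT d Ω T) := by
  constructor
  rw [OmT, Measure.restrict_apply_univ]
  exact (hΩb.prod (Metric.isBounded_Ioo 0 T)).measure_lt_top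

lemma inner_eq (f g : LP) : (inner ℝ f g : ℝ) = ∫ p, f p * g p ∂ν := by
  rw [MeasureTheory.L2.inner_def]
  refine integral_congr_ae (Eventually.of_forall fun p => ?_)
  simp [RCLike.inner_apply, mul_comm]

lemma int_coe [IsFiniteMeasure (OmT d Ω T)] (f : LP) : Integrable (⇑f) ν :=
  (Lp.memLp f).integrable one_le_two

lemma int_mul (f g : LP) : Integrable (fun p => f p * g p) ν := by
  have h := MeasureTheory.L2.integrable_inner (𝕜 := ℝ) f g
  simpa [RCLike.inner_apply, mul_comm] using h

lemma meas_coe (f : LP) : Measurable (⇑f) := (Lp.stronglyMeasurable f).measurable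

lemma gf_meas {X : Type*} [MeasurableSpace X] {f g : X → ℝ}
    (hf : Measurable f) (hg : Measurable g) :
    Measurable fun p => gf (f p) (g p) := by
  unfold gf
  exact Measurable.ite (measurableSet_lt measurable_const hf) hg
    (Measurable.ite (measurableSet_lt hf measurable_const) hg.neg hg.abs)

lemma int_dom [IsFiniteMeasure (OmT d Ω T)] (g : LP) {s : _ → ℝ} (hs : Measurable s)
    (hdom : ∀ᵐ p ∂ν, |s p| ≤ |g p|) : Integrable s ν := by
  refine Integrable.mono' (int_coe g).abs hs.aestronglyMeasurable ?_
  filter_upwards [hdom] with p hp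
  simpa [Real.norm_eq_abs] using hp

lemma coe_add_smul (f g : LP) (c : ℝ) :
    ⇑(f + c • g) =ᵐ[ν] fun p => f p + c * g p := by
  filter_upwards [Lp.coeFn_add f (c • g), Lp.coeFn_smul c g] with p h1 h2
  simp only [h1, Pi.add_apply, h2, Pi.smul_apply, smul_eq_mul]

lemma construct [IsFiniteMeasure (OmT d Ω T)]
    {ub h : LP} (hub : ub ∈ Uad d Ω T α β) (htan : h ∈ TanCone d Ω T α β ub)
    {t : ℕ → ℝ} (htp : ∀ k, 0 < t k) (ht0 : Tendsto t atTop (𝓝 0)) :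
    ∃ v : ℕ → LP,
      Tendsto v atTop (𝓝 h) ∧
      (∀ k, ub + t k • v k ∈ Uad d Ω T α β) ∧
      (∀ k, j1 d Ω T (ub + t k • v k)
          = j1 d Ω T ub + t k * ∫ p, gf (ub p) ((v k) p) ∂ν) ∧
      Tendsto (fun k => ∫ p, gf (ub p) ((v k) p) ∂ν) atTop (𝓝 (j1' d Ω T ub h)) ∧
      (∀ k, ∀ᵐ p ∂ν, min (h p) 0 ≤ (v k) p ∧ (v k) p ≤ max (h p) 0) := by
  have mu : Measurable (⇑ub) := meas_coe ub
  have mh : Measurable (⇑h) := meas_coe h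
  set s : ℕ → ((Fin d → ℝ) × ℝ) → ℝ := fun k p => tr α β (ub p) (h p) (t k) with hsdef
  have ms : ∀ k, Measurable (s k) := by
    intro k
    have hA : MeasurableSet {p : (Fin d → ℝ) × ℝ | ub p ≠ 0 ∧ |ub p| < Real.sqrt (t k)} := by
      rw [Set.setOf_and]
      exact ((measurableSet_eq_fun mu measurable_const).compl).inter
        (measurableSet_lt mu.abs measurable_const)
    unfold s
    unfold tr
    exact Measurable.ite hA measurable_const
      ((measurable_const.min ((measurable_const.sub mu).div_const _)).min
        ((measurable_const.max ((measurable_const.sub mu).div_const _)).max mh))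
  have hbox : ∀ᵐ p ∂ν, α ≤ ub p ∧ ub p ≤ β := hub
  have htan' : ∀ᵐ p ∂ν, (ub p = α → 0 ≤ h p) ∧ (ub p = β → h p ≤ 0) := htan
  have hbet : ∀ k, ∀ᵐ p ∂ν, min (h p) 0 ≤ s k p ∧ s k p ≤ max (h p) 0 := by
    intro k
    filter_upwards [hbox] with p hp
    exact tr_between (htp k) hp.1 hp.2
  have hdom : ∀ k, ∀ᵐ p ∂ν, |s k p| ≤ |h p| := by
    intro k
    filter_upwards [hbet k] with p hp
    exact between_abs hp.1 hp.2
  have hmem : ∀ k, MemLp (s k) 2 ν := fun k =>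
    MemLp.of_le (Lp.memLp h) (ms k).aestronglyMeasurable
      (by filter_upwards [hdom k] with p hp; simpa [Real.norm_eq_abs] using hp)
  set v : ℕ → LP := fun k => (hmem k).toLp (s k) with hvdef
  have hvs : ∀ k, ⇑(v k) =ᵐ[ν] s k := fun k => (hmem k).coeFn_toLp
  have hzcoe : ∀ k, ⇑(ub + t k • v k) =ᵐ[ν] fun p => ub p + t k * s k p := by
    intro k
    filter_upwards [coe_add_smul ub (v k) (t k), hvs k] with p h1 h2
    rw [h1, h2]
  have hfeas : ∀ k, ub + t k • v k ∈ Uad d Ω T α β := by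
    intro k
    show ∀ᵐ p ∂ν, α ≤ (ub + t k • v k) p ∧ (ub + t k • v k) p ≤ β
    filter_upwards [hzcoe k, hbox] with p h1 hp
    rw [h1]
    exact tr_feas (htp k) hp.1 hp.2
  have gint : ∀ k, Integrable (fun p => gf (ub p) (s k p)) ν := by
    intro k
    refine Integrable.mono' (int_coe h).abs (gf_meas mu (ms k)).aestronglyMeasurable ?_
    filter_upwards [hdom k] with p hp
    rw [Real.norm_eq_abs]
    exact (abs_gf_le _ _).trans hp
  have hj1 : ∀ k, j1 d Ω T (ub + t k • v k)
      = j1 d Ω T ub + t k * ∫ p, gf (ub p) ((v k) p) ∂ν := by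
    intro k
    have e0 : ∫ p, gf (ub p) ((v k) p) ∂ν = ∫ p, gf (ub p) (s k p) ∂ν :=
      integral_congr_ae (by filter_upwards [hvs k] with p hp; rw [hp])
    have e1 : j1 d Ω T (ub + t k • v k)
        = ∫ p, (|ub p| + t k * gf (ub p) (s k p)) ∂ν := by
      refine integral_congr_ae ?_
      filter_upwards [hzcoe k, hbox] with p h1 hp
      show |(ub + t k • v k) p| = _
      rw [h1]
      have h3 := tr_id (a := α) (b := β) (h0 := h p) (htp k) hp.1 hp.2
      linarith [h3]
    rw [e0, e1, integral_add ((int_coe ub).abs) ((gint k).const_mul (t k))]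
    congr 1
    exact integral_const_mul _ _
  have hptconv : ∀ᵐ p ∂ν, ∀ᶠ k in atTop, s k p = h p := by
    filter_upwards [hbox, htan'] with p hp hp2
    exact tr_eventually hp.1 hp.2 hp2.1 hp2.2 htp ht0
  have hP4 : Tendsto (fun k => ∫ p, gf (ub p) ((v k) p) ∂ν) atTop (𝓝 (j1' d Ω T ub h)) := by
    have e0 : ∀ k, ∫ p, gf (ub p) ((v k) p) ∂ν = ∫ p, gf (ub p) (s k p) ∂ν := fun k =>
      integral_congr_ae (by filter_upwards [hvs k] with p hp; rw [hp])
    have hj1e : j1' d Ω T ub h = ∫ p, gf (ub p) (h p) ∂ν := rfl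
    rw [hj1e]
    refine Tendsto.congr (fun k => (e0 k).symm) ?_
    refine tendsto_integral_of_dominated_convergence (fun p => |h p|)
      (fun k => (gf_meas mu (ms k)).aestronglyMeasurable) (int_coe h).abs
      (fun k => ?_) ?_
    · filter_upwards [hdom k] with p hp
      rw [Real.norm_eq_abs]
      exact (abs_gf_le _ _).trans hp
    · filter_upwards [hptconv] with p hp
      refine tendsto_const_nhds.congr' ?_
      filter_upwards [hp] with k hk
      rw [hk]
  have hb2 : Integrable (fun p => 4 * (h p * h p)) ν := (int_mul h h).const_mul 4
  have hI2 : Tendsto (fun k => ∫ p, (s k p - h p)^2 ∂ν) atTop (𝓝 0) := by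
    have h0 : Tendsto (fun k => ∫ p, (s k p - h p)^2 ∂ν) atTop (𝓝 (∫ (_ : (Fin d → ℝ) × ℝ), (0:ℝ) ∂ν)) := by
      refine tendsto_integral_of_dominated_convergence (fun p => 4 * (h p * h p))
        (fun k => (((ms k).sub mh).pow_const 2).aestronglyMeasurable) hb2 (fun k => ?_) ?_
      · filter_upwards [hdom k] with p hp
        have e1 : s k p ^ 2 ≤ h p ^ 2 := by
          rw [← sq_abs (s k p), ← sq_abs (h p)]
          exact pow_le_pow_left₀ (abs_nonneg _) hp 2
        rw [Real.norm_eq_abs, abs_of_nonneg (sq_nonneg _)]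
        nlinarith [sq_nonneg (s k p + h p)]
      · filter_upwards [hptconv] with p hp
        refine tendsto_const_nhds.congr' ?_
        filter_upwards [hp] with k hk
        simp [hk]
    simpa using h0
  have hnormconv : Tendsto (fun k => ‖v k - h‖) atTop (𝓝 0) := by
    have he : ∀ k, ‖v k - h‖ = Real.sqrt (∫ p, (s k p - h p)^2 ∂ν) := by
      intro k
      have e1 : (inner ℝ (v k - h) (v k - h) : ℝ) = ∫ p, (s k p - h p)^2 ∂ν := by
        rw [inner_eq]
        refine integral_congr_ae ?_
        filter_upwards [Lp.coeFn_sub (v k) h, hvs k] with p h1 h2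
        simp only [h1, Pi.sub_apply, h2]
        ring
      rw [← Real.sqrt_sq (norm_nonneg (v k - h)), ← real_inner_self_eq_norm_sq, e1]
    have h2 := (Real.continuous_sqrt.tendsto 0).comp hI2
    rw [show Real.sqrt 0 = 0 from Real.sqrt_zero] at h2
    exact h2.congr fun k => (he k).symm
  have hP1 : Tendsto v atTop (𝓝 h) := by
    rw [tendsto_iff_norm_sub_tendsto_zero]
    exact hnormconv
  have hbet' : ∀ k, ∀ᵐ p ∂ν, min (h p) 0 ≤ (v k) p ∧ (v k) p ≤ max (h p) 0 := by
    intro k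
    filter_upwards [hbet k, hvs k] with p h1 h2
    rw [h2]
    exact h1
  exact ⟨v, hP1, hfeas, hj1, hP4, hbet'⟩

end MeasAux

section Main

variable {d : ℕ} {Ω : Set (Fin d → ℝ)} {T α β μ₀ : ℝ}

local notation "ν" => OmT d Ω T
local notation "LP" => Lp ℝ 2 (OmT d Ω T)

lemma G1_feas {z : LP} (hz : z ∈ Uad d Ω T α β) :
    G1 d Ω T α β μ₀ z = ((μ₀ * j1 d Ω T z : ℝ) : EReal) := by
  simp [G1, indUad, hz]

lemma G1_infeas {z : LP} (hz : z ∉ Uad d Ω T α β) :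
    G1 d Ω T α β μ₀ z = ⊤ := by
  simp only [G1, indUad]
  rw [if_neg hz]
  exact EReal.top_add_coe _

lemma subgrad_real {ub Fp : LP}
    (hsub : ∀ z : LP,
      G1 d Ω T α β μ₀ ub + ((inner ℝ (-Fp) (z - ub) : ℝ) : EReal) ≤ G1 d Ω T α β μ₀ z)
    (hub : ub ∈ Uad d Ω T α β) {z : LP} (hz : z ∈ Uad d Ω T α β) :
    μ₀ * j1 d Ω T ub + (inner ℝ (-Fp) (z - ub) : ℝ) ≤ μ₀ * j1 d Ω T z := by
  have h := hsub z
  rw [G1_feas hub, G1_feas hz, ← EReal.coe_add] at h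
  exact_mod_cast h

lemma liminf_eq_zero_of {f : ℕ → EReal} (h : ∀ k, f k = 0) : liminf f atTop = 0 := by
  rw [show f = fun _ => (0 : EReal) from funext h]
  exact liminf_const 0

lemma ssub_nonneg [IsFiniteMeasure (OmT d Ω T)] {ub Fp : LP}
    (hub : ub ∈ Uad d Ω T α β)
    (hsub : ∀ z : LP,
      G1 d Ω T α β μ₀ ub + ((inner ℝ (-Fp) (z - ub) : ℝ) : EReal) ≤ G1 d Ω T α β μ₀ z)
    (h : LP) :
    (0 : EReal) ≤ ssub d Ω T (G1 d Ω T α β μ₀) ub (-Fp) h := by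
  refine le_sInf ?_
  rintro L ⟨t, v, htp, ht0, hw, rfl⟩
  have hterm : ∀ k, (0:EReal) ≤
      ((2 / (t k) ^ 2 : ℝ) : EReal) *
        (G1 d Ω T α β μ₀ (ub + t k • v k) - G1 d Ω T α β μ₀ ub -
          ((t k * (inner ℝ (-Fp) (v k) : ℝ) : ℝ) : EReal)) := by
    intro k
    by_cases hz : ub + t k • v k ∈ Uad d Ω T α β
    · have h8 := subgrad_real hsub hub hz
      rw [add_sub_cancel_left, real_inner_smul_right] at h8
      rw [G1_feas hz, G1_feas hub, ← EReal.coe_sub, ← EReal.coe_sub, ← EReal.coe_mul,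
        EReal.coe_nonneg]
      have ht2 : (0:ℝ) ≤ 2 / (t k)^2 := by positivity
      refine mul_nonneg ht2 ?_
      linarith
    · rw [G1_infeas hz, G1_feas hub, EReal.top_sub_coe, EReal.top_sub_coe,
        EReal.coe_mul_top_of_pos (div_pos two_pos (pow_pos (htp k) 2))]
      exact le_top
  calc (0:EReal) = liminf (fun _ : ℕ => (0:EReal)) atTop := (liminf_const 0).symm
    _ ≤ _ := liminf_le_liminf (Eventually.of_forall hterm)

lemma crit_nonneg [IsFiniteMeasure (OmT d Ω T)] {ub Fp h : LP}
    (hub : ub ∈ Uad d Ω T α β)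
    (hsub : ∀ z : LP,
      G1 d Ω T α β μ₀ ub + ((inner ℝ (-Fp) (z - ub) : ℝ) : EReal) ≤ G1 d Ω T α β μ₀ z)
    (htan : h ∈ TanCone d Ω T α β ub) :
    0 ≤ (inner ℝ Fp h : ℝ) + μ₀ * j1' d Ω T ub h := by
  obtain ⟨v, hv1, hv2, hv3, hv4, -⟩ := construct hub htan
    (t := fun n => ((n:ℝ)+1)⁻¹) (fun n => by positivity)
    (by simpa [one_div] using tendsto_one_div_add_atTop_nhds_zero_nat (𝕜 := ℝ))
  have key : ∀ n, 0 ≤ (inner ℝ Fp (v n) : ℝ) + μ₀ * ∫ p, gf (ub p) ((v n) p) ∂ν := by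
    intro n
    have h8 := subgrad_real hsub hub (hv2 n)
    rw [add_sub_cancel_left, real_inner_smul_right, hv3 n, inner_neg_left] at h8
    have h9 : 0 ≤ ((n:ℝ)+1)⁻¹ *
        ((inner ℝ Fp (v n) : ℝ) + μ₀ * ∫ p, gf (ub p) ((v n) p) ∂ν) := by nlinarith [h8]
    exact (mul_nonneg_iff_of_pos_left (by positivity)).1 h9
  have hlim : Tendsto (fun n => (inner ℝ Fp (v n) : ℝ) + μ₀ * ∫ p, gf (ub p) ((v n) p) ∂ν)
      atTop (𝓝 ((inner ℝ Fp h : ℝ) + μ₀ * j1' d Ω T ub h)) :=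
    (Tendsto.inner tendsto_const_nhds hv1).add (hv4.const_mul μ₀)
  exact ge_of_tendsto' hlim key

lemma phi_ae [IsFiniteMeasure (OmT d Ω T)] {ub Fp h : LP}
    (hub : ub ∈ Uad d Ω T α β)
    (hsub : ∀ z : LP,
      G1 d Ω T α β μ₀ ub + ((inner ℝ (-Fp) (z - ub) : ℝ) : EReal) ≤ G1 d Ω T α β μ₀ z)
    (hμ : 0 < μ₀) (htan : h ∈ TanCone d Ω T α β ub)
    (hcrit : (inner ℝ Fp h : ℝ) + μ₀ * j1' d Ω T ub h = 0) :
    ∀ᵐ p ∂ν, Fp p * h p + μ₀ * gf (ub p) (h p) = 0 := by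
  have mu := meas_coe ub
  have mh := meas_coe h
  have mF := meas_coe Fp
  have htan' : ∀ᵐ p ∂ν, (ub p = α → 0 ≤ h p) ∧ (ub p = β → h p ≤ 0) := htan
  set φ : ((Fin d → ℝ) × ℝ) → ℝ := fun p => Fp p * h p + μ₀ * gf (ub p) (h p) with hφdef
  have mφ : Measurable φ := (mF.mul mh).add ((gf_meas mu mh).const_mul μ₀)
  have hgint : Integrable (fun p => gf (ub p) (h p)) ν := by
    refine Integrable.mono' (int_coe h).abs (gf_meas mu mh).aestronglyMeasurable ?_
    exact Eventually.of_forall fun p => by rw [Real.norm_eq_abs]; exact abs_gf_le _ _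
  have hφint : Integrable φ ν := (int_mul Fp h).add (hgint.const_mul μ₀)
  have hs' : Measurable (fun p => if φ p < 0 then h p else 0) :=
    Measurable.ite (measurableSet_lt mφ measurable_const) mh measurable_const
  have hmem' : MemLp (fun p => if φ p < 0 then h p else 0) 2 ν := by
    refine MemLp.of_le (Lp.memLp h) hs'.aestronglyMeasurable ?_
    refine Eventually.of_forall fun p => ?_
    by_cases hc : φ p < 0 <;> simp [hc, Real.norm_eq_abs, abs_nonneg]
  set h' : LP := hmem'.toLp _ with hh'def
  have hh'c : ⇑h' =ᵐ[ν] fun p => if φ p < 0 then h p else 0 := hmem'.coeFn_toLp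
  have htan2 : h' ∈ TanCone d Ω T α β ub := by
    show ∀ᵐ p ∂ν, (ub p = α → 0 ≤ h' p) ∧ (ub p = β → h' p ≤ 0)
    filter_upwards [htan', hh'c] with p hp hc
    constructor
    · intro he; rw [hc]; split_ifs
      · exact hp.1 he
      · exact le_refl 0
    · intro he; rw [hc]; split_ifs
      · exact hp.2 he
      · exact le_refl 0
  have hkey := crit_nonneg hub hsub htan2
  have e1 : (inner ℝ Fp h' : ℝ) = ∫ p, Fp p * (if φ p < 0 then h p else 0) ∂ν := by
    rw [inner_eq]
    exact integral_congr_ae (by filter_upwards [hh'c] with p hp; rw [hp])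
  have e2 : j1' d Ω T ub h' = ∫ p, gf (ub p) (if φ p < 0 then h p else 0) ∂ν := by
    refine integral_congr_ae ?_
    filter_upwards [hh'c] with p hp
    show gf (ub p) (h' p) = _
    rw [hp]
  have e3 : ∀ p, Fp p * (if φ p < 0 then h p else 0)
      + μ₀ * gf (ub p) (if φ p < 0 then h p else 0)
      = if φ p < 0 then φ p else 0 := by
    intro p
    by_cases hc : φ p < 0
    · rw [if_pos hc, if_pos hc]
    · simp [hc, gf_zero]
  have hint1 : Integrable (fun p => Fp p * (if φ p < 0 then h p else 0)) ν := by
    refine Integrable.mono' (int_mul Fp h).abs (mF.mul hs').aestronglyMeasurable ?_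
    refine Eventually.of_forall fun p => ?_
    by_cases hc : φ p < 0
    · simp [hc, Real.norm_eq_abs, abs_mul]
    · simp only [hc, if_false, mul_zero, norm_zero, Real.norm_eq_abs, abs_mul]
      positivity
  have hint2 : Integrable (fun p => gf (ub p) (if φ p < 0 then h p else 0)) ν := by
    refine Integrable.mono' (int_coe h).abs (gf_meas mu hs').aestronglyMeasurable ?_
    refine Eventually.of_forall fun p => ?_
    rw [Real.norm_eq_abs]
    refine (abs_gf_le _ _).trans ?_
    by_cases hc : φ p < 0 <;> simp [hc, abs_nonneg]
  have hψint : Integrable (fun p => if φ p < 0 then φ p else 0) ν := by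
    refine Integrable.mono' hφint.abs
      (Measurable.ite (measurableSet_lt mφ measurable_const) mφ
        measurable_const).aestronglyMeasurable ?_
    refine Eventually.of_forall fun p => ?_
    by_cases hc : φ p < 0 <;> simp [hc, Real.norm_eq_abs, abs_nonneg]
  have hψ0 : 0 ≤ ∫ p, (if φ p < 0 then φ p else 0) ∂ν := by
    have e4 : (inner ℝ Fp h' : ℝ) + μ₀ * j1' d Ω T ub h'
        = ∫ p, (if φ p < 0 then φ p else 0) ∂ν := by
      rw [e1, e2, ← integral_const_mul, ← integral_add hint1 (hint2.const_mul μ₀)]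
      exact integral_congr_ae (Eventually.of_forall fun p => e3 p)
    rw [← e4]
    exact hkey
  have hψle : ∫ p, (if φ p < 0 then φ p else 0) ∂ν ≤ 0 := by
    refine integral_nonpos ?_
    intro p
    by_cases hc : φ p < 0
    · simp [hc, hc.le]
    · simp [hc]
  have hψeq : ∀ᵐ p ∂ν, (if φ p < 0 then φ p else 0) = 0 := by
    have hnn : 0 ≤ᵐ[ν] fun p => -(if φ p < 0 then φ p else 0) := by
      refine Eventually.of_forall fun p => ?_
      by_cases hc : φ p < 0
      · simp [hc, hc.le]
      · simp [hc]
    have h5 : ∫ p, -(if φ p < 0 then φ p else 0) ∂ν = 0 := by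
      rw [integral_neg, le_antisymm hψle hψ0, neg_zero]
    have h6 := (integral_eq_zero_iff_of_nonneg_ae hnn hψint.neg).1 h5
    filter_upwards [h6] with p hp
    have hp' : -(if φ p < 0 then φ p else 0) = 0 := hp
    linarith
  have hφnn : 0 ≤ᵐ[ν] φ := by
    filter_upwards [hψeq] with p hp
    by_cases hc : φ p < 0
    · rw [if_pos hc] at hp
      exact absurd hp (ne_of_lt hc)
    · exact not_lt.1 hc
  have hφ0 : ∫ p, φ p ∂ν = 0 := by
    have e5 : ∫ p, φ p ∂ν = (inner ℝ Fp h : ℝ) + μ₀ * j1' d Ω T ub h := by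
      simp only [hφdef]
      rw [integral_add (int_mul Fp h) (hgint.const_mul μ₀), integral_const_mul, inner_eq]
      rfl
    rw [e5, hcrit]
  have h7 := (integral_eq_zero_iff_of_nonneg_ae hφnn hφint).1 hφ0
  filter_upwards [h7] with p hp
  exact hp

lemma quot_zero [IsFiniteMeasure (OmT d Ω T)] {ub Fp h : LP}
    (hub : ub ∈ Uad d Ω T α β)
    (hsub : ∀ z : LP,
      G1 d Ω T α β μ₀ ub + ((inner ℝ (-Fp) (z - ub) : ℝ) : EReal) ≤ G1 d Ω T α β μ₀ z)
    (hμ : 0 < μ₀) (htan : h ∈ TanCone d Ω T α β ub)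
    (hcrit : (inner ℝ Fp h : ℝ) + μ₀ * j1' d Ω T ub h = 0)
    {t : ℕ → ℝ} (htp : ∀ k, 0 < t k) (ht0 : Tendsto t atTop (𝓝 0)) :
    ∃ v : ℕ → LP, Tendsto v atTop (𝓝 h) ∧ ∀ k,
      ((2 / (t k) ^ 2 : ℝ) : EReal) *
        (G1 d Ω T α β μ₀ (ub + t k • v k) - G1 d Ω T α β μ₀ ub -
          ((t k * (inner ℝ (-Fp) (v k) : ℝ) : ℝ) : EReal)) = 0 := by
  have hφae := phi_ae hub hsub hμ htan hcrit
  obtain ⟨v, hv1, hv2, hv3, -, hv5⟩ := construct hub htan htp ht0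
  refine ⟨v, hv1, fun k => ?_⟩
  have mu := meas_coe ub
  have hvint : Integrable (fun p => gf (ub p) ((v k) p)) ν := by
    refine Integrable.mono' (int_coe (v k)).abs
      (gf_meas mu (meas_coe (v k))).aestronglyMeasurable ?_
    exact Eventually.of_forall fun p => by rw [Real.norm_eq_abs]; exact abs_gf_le _ _
  have hzero : ∫ p, (Fp p * (v k) p + μ₀ * gf (ub p) ((v k) p)) ∂ν = 0 := by
    have he : (fun p => Fp p * (v k) p + μ₀ * gf (ub p) ((v k) p)) =ᵐ[ν]
        (fun _ => (0:ℝ)) := by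
      filter_upwards [hφae, hv5 k] with p h1 h2
      exact phi_scale h2.1 h2.2 h1
    rw [integral_congr_ae he, integral_zero]
  have hsplit : (inner ℝ Fp (v k) : ℝ) + μ₀ * ∫ p, gf (ub p) ((v k) p) ∂ν = 0 := by
    rw [inner_eq, ← integral_const_mul, ← integral_add (int_mul Fp (v k)) (hvint.const_mul μ₀)]
    exact hzero
  rw [G1_feas (hv2 k), G1_feas hub, hv3 k, inner_neg_left,
    ← EReal.coe_sub, ← EReal.coe_sub, ← EReal.coe_mul]
  rw [show (2 / (t k) ^ 2 *
      (μ₀ * (j1 d Ω T ub + t k * ∫ p, gf (ub p) ((v k) p) ∂ν) - μ₀ * j1 d Ω T ub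
        - t k * (-(inner ℝ Fp (v k) : ℝ))) : ℝ)
      = 2 / (t k) ^ 2 * (t k * ((inner ℝ Fp (v k) : ℝ) + μ₀ * ∫ p, gf (ub p) ((v k) p) ∂ν))
    from by ring]
  rw [hsplit, mul_zero, mul_zero]
  exact EReal.coe_zero

lemma tendsto_top_noncrit [IsFiniteMeasure (OmT d Ω T)] {ub Fp h : LP}
    (hub : ub ∈ Uad d Ω T α β)
    (hsub : ∀ z : LP,
      G1 d Ω T α β μ₀ ub + ((inner ℝ (-Fp) (z - ub) : ℝ) : EReal) ≤ G1 d Ω T α β μ₀ z)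
    (hμ : 0 < μ₀)
    (hcpos : 0 < (inner ℝ Fp h : ℝ) + μ₀ * j1' d Ω T ub h)
    {t : ℕ → ℝ} (htp : ∀ k, 0 < t k) (ht0 : Tendsto t atTop (𝓝 0))
    {v : ℕ → LP} (hw : WConv d Ω T v h) :
    Tendsto (fun k => ((2 / (t k) ^ 2 : ℝ) : EReal) *
        (G1 d Ω T α β μ₀ (ub + t k • v k) - G1 d Ω T α β μ₀ ub -
          ((t k * (inner ℝ (-Fp) (v k) : ℝ) : ℝ) : EReal))) atTop (𝓝 ⊤) := by
  have mu := meas_coe ub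
  have mh := meas_coe h
  set σ : ((Fin d → ℝ) × ℝ) → ℝ := fun p =>
    if 0 < ub p then 1 else if ub p < 0 then -1 else if 0 ≤ h p then 1 else -1 with hσdef
  have mσ : Measurable σ :=
    Measurable.ite (measurableSet_lt measurable_const mu) measurable_const
      (Measurable.ite (measurableSet_lt mu measurable_const) measurable_const
        (Measurable.ite (measurableSet_le measurable_const mh) measurable_const
          measurable_const))
  have hσb : ∀ p, |σ p| ≤ 1 := by
    intro p
    rw [hσdef]
    simp only
    split_ifs <;> norm_num
  have hmemσ : MemLp σ 2 ν :=
    MemLp.of_bound mσ.aestronglyMeasurable 1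
      (Eventually.of_forall fun p => by rw [Real.norm_eq_abs]; exact hσb p)
  set ℓv : LP := μ₀ • hmemσ.toLp σ + Fp with hℓdef
  have hℓf : ∀ f : LP, (inner ℝ ℓv f : ℝ) = μ₀ * ∫ p, σ p * f p ∂ν + (inner ℝ Fp f : ℝ) := by
    intro f
    rw [hℓdef, inner_add_left, real_inner_smul_left]
    congr 2
    rw [inner_eq]
    exact integral_congr_ae (by filter_upwards [hmemσ.coeFn_toLp] with p hp; rw [hp])
  have hσg : ∀ p (s0 : ℝ), σ p * s0 ≤ gf (ub p) s0 := by
    intro p s0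
    rw [hσdef]
    simp only
    unfold gf
    split_ifs <;> simp [le_abs_self, neg_le_abs]
  have hσh : ∫ p, σ p * h p ∂ν = j1' d Ω T ub h := by
    refine integral_congr_ae (Eventually.of_forall fun p => ?_)
    rw [hσdef]
    simp only
    split_ifs with h1 h2 h3
    · exact one_mul _
    · exact neg_one_mul _
    · rw [one_mul]; exact (abs_of_nonneg h3).symm
    · rw [neg_one_mul]; exact (abs_of_neg (not_le.1 h3)).symm
  have hlh : (inner ℝ ℓv h : ℝ) = (inner ℝ Fp h : ℝ) + μ₀ * j1' d Ω T ub h := by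
    rw [hℓf h, hσh]; ring
  set c := (inner ℝ Fp h : ℝ) + μ₀ * j1' d Ω T ub h with hcdef
  have hconv : Tendsto (fun k => (inner ℝ ℓv (v k) : ℝ)) atTop (𝓝 c) := by
    have h2 := (hw ℓv).congr fun k => real_inner_comm ℓv (v k)
    have h1 : (inner ℝ h ℓv : ℝ) = c := by rw [real_inner_comm ℓv h]; exact hlh
    rw [h1] at h2
    exact h2
  have hfb : ∀ k, ub + t k • v k ∈ Uad d Ω T α β →
      ((2 / (t k) ^ 2 * (t k * (inner ℝ ℓv (v k) : ℝ)) : ℝ) : EReal) ≤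
      ((2 / (t k) ^ 2 : ℝ) : EReal) *
        (G1 d Ω T α β μ₀ (ub + t k • v k) - G1 d Ω T α β μ₀ ub -
          ((t k * (inner ℝ (-Fp) (v k) : ℝ) : ℝ) : EReal)) := by
    intro k hz
    have mvk := meas_coe (v k)
    have hgint : Integrable (fun p => gf (ub p) ((v k) p)) ν := by
      refine Integrable.mono' (int_coe (v k)).abs (gf_meas mu mvk).aestronglyMeasurable ?_
      exact Eventually.of_forall fun p => by rw [Real.norm_eq_abs]; exact abs_gf_le _ _
    have hσint : Integrable (fun p => σ p * (v k) p) ν := by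
      refine Integrable.mono' (int_coe (v k)).abs (mσ.mul mvk).aestronglyMeasurable ?_
      refine Eventually.of_forall fun p => ?_
      rw [Real.norm_eq_abs, abs_mul]
      simpa using mul_le_mul_of_nonneg_right (hσb p) (abs_nonneg ((v k) p))
    have habsint : Integrable (fun p => |ub p + t k * (v k) p|) ν := by
      refine ((int_coe (ub + t k • v k)).abs).congr ?_
      filter_upwards [coe_add_smul ub (v k) (t k)] with p hp
      rw [hp]
    have e2 : j1 d Ω T (ub + t k • v k) = ∫ p, |ub p + t k * (v k) p| ∂ν :=
      integral_congr_ae (by filter_upwards [coe_add_smul ub (v k) (t k)] with p hp; rw [hp])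
    have e3 : ∫ p, (t k * gf (ub p) ((v k) p)) ∂ν
        ≤ ∫ p, (|ub p + t k * (v k) p| - |ub p|) ∂ν :=
      integral_mono_ae (hgint.const_mul (t k)) (habsint.sub ((int_coe ub).abs))
        (Eventually.of_forall fun p => gf_lb (htp k).le _ _)
    rw [integral_const_mul, integral_sub habsint ((int_coe ub).abs)] at e3
    have e1 : t k * ∫ p, gf (ub p) ((v k) p) ∂ν
        ≤ j1 d Ω T (ub + t k • v k) - j1 d Ω T ub := by
      rw [e2]
      exact le_trans e3 (le_of_eq rfl)
    have e4 : ∫ p, σ p * (v k) p ∂ν ≤ ∫ p, gf (ub p) ((v k) p) ∂ν :=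
      integral_mono_ae hσint hgint (Eventually.of_forall fun p => hσg p _)
    have e5 : t k * (inner ℝ ℓv (v k) : ℝ) ≤
        μ₀ * j1 d Ω T (ub + t k • v k) - μ₀ * j1 d Ω T ub
          - t k * (inner ℝ (-Fp) (v k) : ℝ) := by
      rw [hℓf (v k), inner_neg_left]
      have e7 : t k * μ₀ * (∫ p, σ p * (v k) p ∂ν)
          ≤ t k * μ₀ * ∫ p, gf (ub p) ((v k) p) ∂ν :=
        mul_le_mul_of_nonneg_left e4 (mul_nonneg (htp k).le hμ.le)
      have e8 : μ₀ * (t k * ∫ p, gf (ub p) ((v k) p) ∂ν)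
          ≤ μ₀ * (j1 d Ω T (ub + t k • v k) - j1 d Ω T ub) :=
        mul_le_mul_of_nonneg_left e1 hμ.le
      ring_nf
      ring_nf at e7 e8
      linarith
    rw [G1_feas hz, G1_feas hub, ← EReal.coe_sub, ← EReal.coe_sub, ← EReal.coe_mul]
    exact EReal.coe_le_coe_iff.2 (mul_le_mul_of_nonneg_left e5 (div_pos two_pos (pow_pos (htp k) 2)).le)
  rw [EReal.tendsto_nhds_top_iff_real]
  intro M
  have hev1 : ∀ᶠ k in atTop, c / 2 < (inner ℝ ℓv (v k) : ℝ) :=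
    hconv.eventually_const_lt (half_lt_self hcpos)
  have hinv : Tendsto (fun k => (t k)⁻¹) atTop atTop := by
    refine tendsto_inv_nhdsGT_zero.comp ?_
    rw [tendsto_nhdsWithin_iff]
    exact ⟨ht0, Eventually.of_forall fun k => Set.mem_Ioi.2 (htp k)⟩
  have hgrow : Tendsto (fun k => 2 / (t k) ^ 2 * (t k * (c / 2))) atTop atTop := by
    refine (hinv.const_mul_atTop hcpos).congr fun k => ?_
    have hne := (htp k).ne'
    field_simp
  have hev2 : ∀ᶠ k in atTop, M < 2 / (t k) ^ 2 * (t k * (c / 2)) :=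
    hgrow.eventually_gt_atTop M
  filter_upwards [hev1, hev2] with k h1 h2
  by_cases hz : ub + t k • v k ∈ Uad d Ω T α β
  · refine lt_of_lt_of_le ?_ (hfb k hz)
    refine lt_of_lt_of_le (EReal.coe_lt_coe_iff.2 h2) (EReal.coe_le_coe_iff.2 ?_)
    exact mul_le_mul_of_nonneg_left
      (mul_le_mul_of_nonneg_left h1.le (htp k).le) (div_pos two_pos (pow_pos (htp k) 2)).le
  · rw [G1_infeas hz, G1_feas hub, EReal.top_sub_coe, EReal.top_sub_coe,
      EReal.coe_mul_top_of_pos (div_pos two_pos (pow_pos (htp k) 2))]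
    exact EReal.coe_lt_top M

lemma tendsto_top_nontan [IsFiniteMeasure (OmT d Ω T)] (hα : α < 0) (hβ : 0 < β)
    {ub Fp h : LP}
    (hub : ub ∈ Uad d Ω T α β) (hnt : h ∉ TanCone d Ω T α β ub)
    {t : ℕ → ℝ} (htp : ∀ k, 0 < t k)
    {v : ℕ → LP} (hw : WConv d Ω T v h) :
    Tendsto (fun k => ((2 / (t k) ^ 2 : ℝ) : EReal) *
        (G1 d Ω T α β μ₀ (ub + t k • v k) - G1 d Ω T α β μ₀ ub -
          ((t k * (inner ℝ (-Fp) (v k) : ℝ) : ℝ) : EReal))) atTop (𝓝 ⊤) := by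
  have mu := meas_coe ub
  have mh := meas_coe h
  set s3 : ((Fin d → ℝ) × ℝ) → ℝ := fun p =>
    if ub p = α ∧ h p < 0 then 1 else if ub p = β ∧ 0 < h p then -1 else 0 with hs3def
  have hA : MeasurableSet {p : (Fin d → ℝ) × ℝ | ub p = α ∧ h p < 0} := by
    rw [Set.setOf_and]
    exact (measurableSet_eq_fun mu measurable_const).inter
      (measurableSet_lt mh measurable_const)
  have hB : MeasurableSet {p : (Fin d → ℝ) × ℝ | ub p = β ∧ 0 < h p} := by
    rw [Set.setOf_and]
    exact (measurableSet_eq_fun mu measurable_const).inter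
      (measurableSet_lt measurable_const mh)
  have ms3 : Measurable s3 :=
    Measurable.ite hA measurable_const
      (Measurable.ite hB measurable_const measurable_const)
  have hs3b : ∀ p, |s3 p| ≤ 1 := by
    intro p
    rw [hs3def]
    simp only
    split_ifs <;> norm_num
  have hmem3 : MemLp s3 2 ν :=
    MemLp.of_bound ms3.aestronglyMeasurable 1
      (Eventually.of_forall fun p => by rw [Real.norm_eq_abs]; exact hs3b p)
  set w3 : LP := hmem3.toLp s3 with hw3def
  have hw3c : ⇑w3 =ᵐ[ν] s3 := hmem3.coeFn_toLp
  have hip : ∀ f : LP, (inner ℝ f w3 : ℝ) = ∫ p, f p * s3 p ∂ν := by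
    intro f
    rw [inner_eq]
    exact integral_congr_ae (by filter_upwards [hw3c] with p hp; rw [hp])
  have hint3 : Integrable (fun p => h p * s3 p) ν := by
    refine Integrable.mono' (int_coe h).abs (mh.mul ms3).aestronglyMeasurable ?_
    refine Eventually.of_forall fun p => ?_
    rw [Real.norm_eq_abs, abs_mul]
    simpa using mul_le_mul_of_nonneg_left (hs3b p) (abs_nonneg (h p))
  have hnonpos : ∀ p, h p * s3 p ≤ 0 := by
    intro p
    rw [hs3def]
    simp only
    split_ifs with h1 h2
    · nlinarith [h1.2]
    · nlinarith [h2.2]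
    · simp
  have hc3 : (inner ℝ h w3 : ℝ) < 0 := by
    rw [hip h]
    rcases lt_or_eq_of_le (integral_nonpos hnonpos) with hlt | heq
    · exact hlt
    · exfalso
      refine hnt ?_
      have hnn : 0 ≤ᵐ[ν] fun p => -(h p * s3 p) :=
        Eventually.of_forall fun p => by
          simp only [Pi.zero_apply]
          linarith [hnonpos p]
      have hz2 : ∫ p, -(h p * s3 p) ∂ν = 0 := by rw [integral_neg, heq, neg_zero]
      have hae := (integral_eq_zero_iff_of_nonneg_ae hnn hint3.neg).1 hz2
      show ∀ᵐ p ∂ν, (ub p = α → 0 ≤ h p) ∧ (ub p = β → h p ≤ 0)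
      filter_upwards [hae] with p hp
      have hp0 : h p * s3 p = 0 := by
        have hp' : -(h p * s3 p) = 0 := hp
        linarith
      constructor
      · intro he
        by_contra hlt0
        push_neg at hlt0
        rw [hs3def] at hp0
        simp only at hp0
        rw [if_pos ⟨he, hlt0⟩, mul_one] at hp0
        exact absurd hp0 (ne_of_lt hlt0)
      · intro he
        by_contra hgt
        push_neg at hgt
        rw [hs3def] at hp0
        simp only at hp0
        have hne : ¬(ub p = α ∧ h p < 0) := by
          rintro ⟨hc1, -⟩
          rw [hc1] at he
          linarith
        rw [if_neg hne, if_pos ⟨he, hgt⟩, mul_neg_one] at hp0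
        have hh0 : h p = 0 := by linarith
        exact absurd hh0 (ne_of_gt hgt)
  have hfeas0 : ∀ k, ub + t k • v k ∈ Uad d Ω T α β → 0 ≤ (inner ℝ (v k) w3 : ℝ) := by
    intro k hz
    rw [hip (v k)]
    refine integral_nonneg_of_ae ?_
    have hz' : ∀ᵐ p ∂ν, α ≤ (ub + t k • v k) p ∧ (ub + t k • v k) p ≤ β := hz
    filter_upwards [hz', coe_add_smul ub (v k) (t k)] with p h1 h2
    rw [h2] at h1
    rw [hs3def]
    simp only [Pi.zero_apply]
    split_ifs with hc1 hc2
    · rw [mul_one]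
      have h5 : 0 ≤ t k * (v k) p := by
        rw [hc1.1] at h1
        linarith [h1.1]
      exact (mul_nonneg_iff_of_pos_left (htp k)).1 h5
    · have h5 : t k * (v k) p ≤ 0 := by
        rw [hc2.1] at h1
        linarith [h1.2]
      nlinarith [htp k, h5]
    · simp
  have hev : ∀ᶠ k in atTop, (inner ℝ (v k) w3 : ℝ) < 0 := (hw w3).eventually_lt_const hc3
  have hevQ : ∀ᶠ k in atTop, (⊤:EReal) = ((2 / (t k) ^ 2 : ℝ) : EReal) *
      (G1 d Ω T α β μ₀ (ub + t k • v k) - G1 d Ω T α β μ₀ ub -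
        ((t k * (inner ℝ (-Fp) (v k) : ℝ) : ℝ) : EReal)) := by
    filter_upwards [hev] with k hk
    have hz : ub + t k • v k ∉ Uad d Ω T α β := fun hzz =>
      absurd (hfeas0 k hzz) (not_le.2 hk)
    rw [G1_infeas hz, G1_feas hub, EReal.top_sub_coe, EReal.top_sub_coe,
      EReal.coe_mul_top_of_pos (div_pos two_pos (pow_pos (htp k) 2))]
  exact Tendsto.congr' hevQ tendsto_const_nhds

lemma ssub_crit [IsFiniteMeasure (OmT d Ω T)] {ub Fp h : LP}
    (hub : ub ∈ Uad d Ω T α β)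
    (hsub : ∀ z : LP,
      G1 d Ω T α β μ₀ ub + ((inner ℝ (-Fp) (z - ub) : ℝ) : EReal) ≤ G1 d Ω T α β μ₀ z)
    (hμ : 0 < μ₀) (htan : h ∈ TanCone d Ω T α β ub)
    (hcrit : (inner ℝ Fp h : ℝ) + μ₀ * j1' d Ω T ub h = 0) :
    ssub d Ω T (G1 d Ω T α β μ₀) ub (-Fp) h = 0 := by
  refine le_antisymm ?_ (ssub_nonneg hub hsub h)
  obtain ⟨v, hv1, hv2⟩ := quot_zero hub hsub hμ htan hcrit
    (t := fun n => ((n:ℝ)+1)⁻¹) (fun n => by positivity)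
    (by simpa [one_div] using tendsto_one_div_add_atTop_nhds_zero_nat (𝕜 := ℝ))
  refine sInf_le ⟨fun n => ((n:ℝ)+1)⁻¹, v, fun n => by positivity,
    by simpa [one_div] using tendsto_one_div_add_atTop_nhds_zero_nat (𝕜 := ℝ),
    fun w => Tendsto.inner hv1 tendsto_const_nhds, ?_⟩
  exact (liminf_eq_zero_of hv2).symm

lemma ssub_top_noncrit [IsFiniteMeasure (OmT d Ω T)] {ub Fp h : LP}
    (hub : ub ∈ Uad d Ω T α β)
    (hsub : ∀ z : LP,
      G1 d Ω T α β μ₀ ub + ((inner ℝ (-Fp) (z - ub) : ℝ) : EReal) ≤ G1 d Ω T α β μ₀ z)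
    (hμ : 0 < μ₀)
    (hcpos : 0 < (inner ℝ Fp h : ℝ) + μ₀ * j1' d Ω T ub h) :
    ssub d Ω T (G1 d Ω T α β μ₀) ub (-Fp) h = ⊤ := by
  refine top_unique (le_sInf ?_)
  rintro L ⟨t, v, htp, ht0, hw, rfl⟩
  exact ge_of_eq (Tendsto.liminf_eq (tendsto_top_noncrit hub hsub hμ hcpos htp ht0 hw))

lemma ssub_top_nontan [IsFiniteMeasure (OmT d Ω T)] (hα : α < 0) (hβ : 0 < β)
    {ub Fp h : LP}
    (hub : ub ∈ Uad d Ω T α β) (hnt : h ∉ TanCone d Ω T α β ub) :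
    ssub d Ω T (G1 d Ω T α β μ₀) ub (-Fp) h = ⊤ := by
  refine top_unique (le_sInf ?_)
  rintro L ⟨t, v, htp, ht0, hw, rfl⟩
  exact ge_of_eq (Tendsto.liminf_eq (tendsto_top_nontan hα hβ hub hnt htp hw))

end Main

end Stmt17Aux

/-- Second subderivative of `G₁` on the critical cone, and strong twice
epi-differentiability. -/
theorem stmt17 (d : ℕ) (Ω : Set (Fin d → ℝ)) (hΩne : Ω.Nonempty) (hΩo : IsOpen Ω)
    (hΩb : Bornology.IsBounded Ω) (T : ℝ) (hT : 0 < T)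
    (α β μ₀ : ℝ) (hα : α < 0) (hβ : 0 < β) (hμ : 0 < μ₀)
    (ub : Lp ℝ 2 (OmT d Ω T)) (hub : ub ∈ Uad d Ω T α β)
    (Fp : Lp ℝ 2 (OmT d Ω T))
    -- `-F'(ū) ∈ ∂G₁(ū)`:
    (hsub : ∀ z : Lp ℝ 2 (OmT d Ω T),
      G1 d Ω T α β μ₀ ub + ((inner ℝ (-Fp) (z - ub) : ℝ) : EReal) ≤ G1 d Ω T α β μ₀ z) :
    (∀ v ∈ { v : Lp ℝ 2 (OmT d Ω T) | v ∈ TanCone d Ω T α β ub ∧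
        (inner ℝ Fp v : ℝ) + μ₀ * j1' d Ω T ub v = 0 },
      ssub d Ω T (G1 d Ω T α β μ₀) ub (-Fp) v = 0) ∧
    STED d Ω T (G1 d Ω T α β μ₀) ub (-Fp) := by
  haveI : IsFiniteMeasure (OmT d Ω T) := Stmt17Aux.finOmT hΩb
  constructor
  · rintro v ⟨htan, hcrit⟩
    exact Stmt17Aux.ssub_crit hub hsub hμ htan hcrit
  · intro h t htp ht0
    by_cases htan : h ∈ TanCone d Ω T α β ub
    · by_cases hcrit : (inner ℝ Fp h : ℝ) + μ₀ * j1' d Ω T ub h = 0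
      · obtain ⟨v, hv1, hv2⟩ := Stmt17Aux.quot_zero hub hsub hμ htan hcrit htp ht0
        refine ⟨v, hv1, ?_⟩
        rw [Stmt17Aux.ssub_crit hub hsub hμ htan hcrit]
        exact Tendsto.congr (fun k => (hv2 k).symm) tendsto_const_nhds
      · have hcpos : 0 < (inner ℝ Fp h : ℝ) + μ₀ * j1' d Ω T ub h :=
          lt_of_le_of_ne (Stmt17Aux.crit_nonneg hub hsub htan) (Ne.symm hcrit)
        refine ⟨fun _ => h, tendsto_const_nhds, ?_⟩
        rw [Stmt17Aux.ssub_top_noncrit hub hsub hμ hcpos]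
        exact Stmt17Aux.tendsto_top_noncrit hub hsub hμ hcpos htp ht0
          (fun w => tendsto_const_nhds)
    · refine ⟨fun _ => h, tendsto_const_nhds, ?_⟩
      rw [Stmt17Aux.ssub_top_nontan hα hβ hub htan]
      exact Stmt17Aux.tendsto_top_nontan hα hβ hub htan htp (fun w => tendsto_const_nhds)

end
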